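/- arXiv:1705.07210 — 2 statements merged into one kernel-verified Lean document; each statement's English description precedes it below -/
import Mathlib

section
/- Escort formula for the derivative of the binary log-partition function: let 1 < t < 2 and let G : ℝ → ℝ be differentiable with exp_t(a/2 - G(a)) + exp_t(-a/2 - G(a)) = 1 for all a ∈ ℝ. Writing p₊(a) = exp_t(a/2 - G(a)) and p₋(a) = exp_t(-a/2 - G(a)), one has for every a: G'(a) = (1/2) · (p₊(a)^t - p₋(a)^t) / (p₊(a)^t + p₋(a)^t). In particular -1/2 < G'(a) < 1/2 whenever both p₊(a) and p₋(a) are positive. -/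
/-- The tempered exponential `exp_t`: for `t ≠ 1` it is
`(max 0 (1 + (1-t)u))^(1/(1-t))`; for `t = 1` it is the standard exponential. -/
noncomputable def texp (t u : ℝ) : ℝ :=
  if t = 1 then Real.exp u else (max 0 (1 + (1 - t) * u)) ^ (1 / (1 - t))

/-!
Write `u a = a/2 - G a` and `v a = -a/2 - G a`. Since `exp_t' = exp_t ^ t` where the base of
`exp_t` is positive, differentiating `exp_t (u a) + exp_t (v a) = 1` gives
`p₊ ^ t * (1/2 - G' a) + p₋ ^ t * (-1/2 - G' a) = 0`, which is solved for `G' a`.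
The same identity holds where a summand is cut off to `0`: for `t > 1`, `exp_t` exceeds `1`
just before its cut-off point, so the summand stays cut off nearby, the other one is locally `1`,
and `G` is locally `a ↦ ∓a/2`.
-/

open Filter Topology

variable {t u : ℝ}

lemma texp_of_ne_one (ht : t ≠ 1) (u : ℝ) :
    texp t u = max 0 (1 + (1 - t) * u) ^ (1 / (1 - t)) :=
  if_neg ht

lemma texp_nonneg (t u : ℝ) : 0 ≤ texp t u := by
  unfold texp
  split_ifs
  · exact (Real.exp_pos u).le
  · exact Real.rpow_nonneg (le_max_left _ _) _

lemma texp_of_base_nonpos (ht : t ≠ 1) (hu : 1 + (1 - t) * u ≤ 0) : texp t u = 0 := by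
  rw [texp_of_ne_one ht, max_eq_left hu,
    Real.zero_rpow (one_div_ne_zero (sub_ne_zero.2 ht.symm))]

lemma texp_eq_one_iff : texp t u = 1 ↔ u = 0 := by
  unfold texp
  split_ifs with ht
  · exact Real.exp_eq_one_iff u
  have hs : 1 - t ≠ 0 := sub_ne_zero.2 (Ne.symm ht)
  refine ⟨fun h => ?_, fun h => by simp [h]⟩
  have hbase : 0 < 1 + (1 - t) * u := by
    by_contra! hb
    rw [max_eq_left hb, Real.zero_rpow (one_div_ne_zero hs)] at h
    exact zero_ne_one h
  rw [max_eq_right hbase.le] at h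
  have hone := (Real.rpow_left_inj hbase.le zero_le_one (one_div_ne_zero hs)).1
    (h.trans (Real.one_rpow _).symm)
  simpa [hs] using hone

lemma one_lt_texp (ht : 1 < t) (hu : 0 < u) (hbase : 0 < 1 + (1 - t) * u) : 1 < texp t u := by
  rw [texp_of_ne_one ht.ne', max_eq_right hbase.le]
  have hs : 1 - t < 0 := by linarith
  exact Real.one_lt_rpow_of_pos_of_lt_one_of_neg hbase (by nlinarith) (one_div_neg.2 hs)

lemma hasDerivAt_texp (hu : 0 < 1 + (1 - t) * u) : HasDerivAt (texp t) (texp t u ^ t) u := by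
  by_cases ht : t = 1
  · subst ht
    have hexp : texp 1 = Real.exp := funext fun _ => if_pos rfl
    rw [hexp, Real.rpow_one]
    exact Real.hasDerivAt_exp u
  have hs : 1 - t ≠ 0 := sub_ne_zero.2 (Ne.symm ht)
  have hbase : HasDerivAt (fun x => 1 + (1 - t) * x) (1 - t) u := by
    simpa using ((hasDerivAt_id u).const_mul (1 - t)).const_add 1
  have hpow := hbase.rpow_const (p := 1 / (1 - t)) (Or.inl hu.ne')
  have hexponent : 1 / (1 - t) - 1 = 1 / (1 - t) * t := by field_simp; ring
  rw [mul_one_div_cancel hs, one_mul, hexponent, Real.rpow_mul hu.le] at hpow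
  rw [texp_of_ne_one ht, max_eq_right hu.le]
  refine hpow.congr_of_eventuallyEq ?_
  filter_upwards [hbase.continuousAt.eventually (lt_mem_nhds hu)] with x hx
  rw [texp_of_ne_one ht, max_eq_right hx.le]

section Partition

variable {u v : ℝ → ℝ} {a : ℝ}

lemma eventuallyEq_zero_of_texp_add_texp (ht : 1 < t) (hu : ContinuousAt u a)
    (huv : ∀ x, texp t (u x) + texp t (v x) = 1) (ha : 1 + (1 - t) * u a ≤ 0) :
    v =ᶠ[𝓝 a] 0 := by
  have hua : 0 < u a := by nlinarith
  filter_upwards [hu.eventually (lt_mem_nhds hua)] with x hx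
  have hle : texp t (u x) ≤ 1 := by linarith [huv x, texp_nonneg t (v x)]
  have hbase : 1 + (1 - t) * u x ≤ 0 := not_lt.1 fun h => (one_lt_texp ht hx h).not_ge hle
  have hvx := huv x
  rwa [texp_of_base_nonpos ht.ne' hbase, zero_add, texp_eq_one_iff] at hvx

lemma texp_rpow_mul_deriv_add_eq_zero_of_base_nonpos (ht : 1 < t) (hu : ContinuousAt u a)
    (huv : ∀ x, texp t (u x) + texp t (v x) = 1) (ha : 1 + (1 - t) * u a ≤ 0) :
    texp t (u a) ^ t * deriv u a + texp t (v a) ^ t * deriv v a = 0 := by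
  rw [texp_of_base_nonpos ht.ne' ha, Real.zero_rpow (by linarith),
    (eventuallyEq_zero_of_texp_add_texp ht hu huv ha).deriv_eq, deriv_zero]
  simp

lemma texp_rpow_mul_deriv_add_eq_zero (ht : 1 < t) (hu : Differentiable ℝ u)
    (hv : Differentiable ℝ v) (huv : ∀ x, texp t (u x) + texp t (v x) = 1) (a : ℝ) :
    texp t (u a) ^ t * deriv u a + texp t (v a) ^ t * deriv v a = 0 := by
  by_cases hua : 1 + (1 - t) * u a ≤ 0
  · exact texp_rpow_mul_deriv_add_eq_zero_of_base_nonpos ht (hu a).continuousAt huv hua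
  by_cases hva : 1 + (1 - t) * v a ≤ 0
  · rw [add_comm]
    exact texp_rpow_mul_deriv_add_eq_zero_of_base_nonpos ht (hv a).continuousAt
      (fun x => (add_comm _ _).trans (huv x)) hva
  push Not at hua hva
  have hsum : HasDerivAt (fun x => texp t (u x) + texp t (v x))
      (texp t (u a) ^ t * deriv u a + texp t (v a) ^ t * deriv v a) a :=
    ((hasDerivAt_texp hua).comp a (hu a).hasDerivAt).add
      ((hasDerivAt_texp hva).comp a (hv a).hasDerivAt)
  rw [show (fun x => texp t (u x) + texp t (v x)) = fun _ => 1 from funext huv] at hsum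
  exact hsum.unique (hasDerivAt_const a 1)

end Partition

lemma rpow_add_rpow_pos {p q : ℝ} (hp : 0 ≤ p) (hq : 0 ≤ q) (hpq : 0 < p + q) (t : ℝ) :
    0 < p ^ t + q ^ t := by
  rcases hp.eq_or_lt with rfl | hp
  · exact add_pos_of_nonneg_of_pos (Real.rpow_nonneg le_rfl t)
      (Real.rpow_pos_of_pos (by linarith) t)
  · exact add_pos_of_pos_of_nonneg (Real.rpow_pos_of_pos hp t) (Real.rpow_nonneg hq t)

lemma half_mul_sub_div_add_mem_Ioo {P M : ℝ} (hP : 0 < P) (hM : 0 < M) :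
    1 / 2 * (P - M) / (P + M) ∈ Set.Ioo (-(1 / 2)) (1 / 2) := by
  constructor
  · rw [lt_div_iff₀ (by linarith)]; linarith
  · rw [div_lt_iff₀ (by linarith)]; linarith

theorem logPartition_deriv_escort_general (t : ℝ) (ht1 : 1 < t)
    (G : ℝ → ℝ) (hGdiff : Differentiable ℝ G)
    (hG : ∀ a : ℝ, texp t (a / 2 - G a) + texp t (-a / 2 - G a) = 1) :
    ∀ a : ℝ,
      deriv G a = (1 / 2) *
        ((texp t (a / 2 - G a)) ^ t - (texp t (-a / 2 - G a)) ^ t) /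
        ((texp t (a / 2 - G a)) ^ t + (texp t (-a / 2 - G a)) ^ t) ∧
      (0 < texp t (a / 2 - G a) → 0 < texp t (-a / 2 - G a) →
        -(1 / 2) < deriv G a ∧ deriv G a < 1 / 2) := by
  intro a
  have hu : HasDerivAt (fun x => x / 2 - G x) (1 / 2 - deriv G a) a :=
    ((hasDerivAt_id' a).div_const 2).sub (hGdiff a).hasDerivAt
  have hv : HasDerivAt (fun x => -x / 2 - G x) (-1 / 2 - deriv G a) a :=
    ((hasDerivAt_neg' a).div_const 2).sub (hGdiff a).hasDerivAt
  have hbalance := texp_rpow_mul_deriv_add_eq_zero ht1 (by fun_prop) (by fun_prop) hG a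
  rw [hu.deriv, hv.deriv] at hbalance
  have hpos := rpow_add_rpow_pos (texp_nonneg t (a / 2 - G a)) (texp_nonneg t (-a / 2 - G a))
    (by rw [hG a]; exact one_pos) t
  have hformula : deriv G a = (1 / 2) *
      ((texp t (a / 2 - G a)) ^ t - (texp t (-a / 2 - G a)) ^ t) /
      ((texp t (a / 2 - G a)) ^ t + (texp t (-a / 2 - G a)) ^ t) := by
    rw [eq_div_iff hpos.ne']; linarith
  exact ⟨hformula, fun hp hm => hformula ▸
    half_mul_sub_div_add_mem_Ioo (Real.rpow_pos_of_pos hp t) (Real.rpow_pos_of_pos hm t)⟩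

/-- Escort formula for the derivative of the binary log-partition function:
for `1 < t < 2` and a differentiable `G` with
`exp_t(a/2 - G a) + exp_t(-a/2 - G a) = 1` for all `a`, writing
`p₊ a = exp_t(a/2 - G a)` and `p₋ a = exp_t(-a/2 - G a)`, one has
`G' a = (1/2) * (p₊ a ^ t - p₋ a ^ t) / (p₊ a ^ t + p₋ a ^ t)`; in particular
`-1/2 < G' a < 1/2` whenever both `p₊ a` and `p₋ a` are positive. -/
theorem logPartition_deriv_escort (t : ℝ) (ht1 : 1 < t) (ht2 : t < 2)
    (G : ℝ → ℝ) (hGdiff : Differentiable ℝ G)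
    (hG : ∀ a : ℝ, texp t (a / 2 - G a) + texp t (-a / 2 - G a) = 1) :
    ∀ a : ℝ,
      deriv G a = (1 / 2) *
        ((texp t (a / 2 - G a)) ^ t - (texp t (-a / 2 - G a)) ^ t) /
        ((texp t (a / 2 - G a)) ^ t + (texp t (-a / 2 - G a)) ^ t) ∧
      (0 < texp t (a / 2 - G a) → 0 < texp t (-a / 2 - G a) →
        -(1 / 2) < deriv G a ∧ deriv G a < 1 / 2) :=
  logPartition_deriv_escort_general t ht1 G hGdiff hG
end

section
/- Convexity of the binary two-temperature loss for t₁ ≥ t₂ and t₁ ≥ 1 (Theorem 1, part 1): let 1 ≤ t₂ ≤ t₁ < 2, and for each a ∈ ℝ let G(a) be the unique real satisfying exp_{t₂}(a/2 - G(a)) + exp_{t₂}(-a/2 - G(a)) = 1 (both summands are positive since t₂ ≥ 1). Then the surrogate loss ξ(a) = -log_{t₁} exp_{t₂}(a/2 - G(a)) is a convex function of a on ℝ. In the special case t₁ = t₂ = t, the loss equals ξ(a) = G(a) - a/2 and in particular a ↦ G(a) - a/2 is convex. -/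
/-- The tempered logarithm `log_t`: for `t ≠ 1` it is `(x^(1-t) - 1)/(1-t)`;
for `t = 1` it is the natural logarithm. -/
noncomputable def tlog (t x : ℝ) : ℝ :=
  if t = 1 then Real.log x else (x ^ (1 - t) - 1) / (1 - t)

/-!
Write `p a = exp_{t₂}(a/2 - G a)`. Since `log_{t₂}` inverts `exp_{t₂}` where the latter is positive,
`p a ∈ (0, 1)` is the inverse of the increasing link `q ↦ log_{t₂} q - log_{t₂} (1 - q)`, so
`ξ = -log_{t₁} ∘ p` is differentiable with
`ξ' = -p^(-t₁) / (p^(-t₂) + (1-p)^(-t₂)) = -1 / (p^(t₁-t₂) + p^t₁ (1-p)^(-t₂))`.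
For `0 ≤ t₂ ≤ t₁` the denominator increases with `p`, hence with `a`, so `ξ'` is monotone.
-/

open Set Function

section LeftInverse

variable {α β : Type*} [LinearOrder α] [LinearOrder β] {g : β → α} {f : α → β} {s : Set β}

theorem StrictMonoOn.monotone_of_leftInverse (hg : StrictMonoOn g s) (hf : ∀ a, f a ∈ s)
    (hgf : LeftInverse g f) : Monotone f := by
  intro a b hab
  by_contra! hlt
  have := hg (hf b) (hf a) hlt
  rw [hgf a, hgf b] at this
  exact hab.not_gt this

theorem StrictMonoOn.subset_range_of_leftInverse (hg : StrictMonoOn g s) (hf : ∀ a, f a ∈ s)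
    (hgf : LeftInverse g f) : s ⊆ range f :=
  fun x hx => ⟨g x, hg.injOn (hf _) hx (hgf (g x))⟩

theorem StrictMonoOn.continuous_of_leftInverse [TopologicalSpace α] [OrderTopology α]
    [TopologicalSpace β] [OrderTopology β] [DenselyOrdered β] (hg : StrictMonoOn g s)
    (hs : IsOpen s) (hf : ∀ a, f a ∈ s) (hgf : LeftInverse g f) : Continuous f := by
  refine continuous_iff_continuousAt.2 fun a => ?_
  refine continuousAt_of_monotoneOn_of_image_mem_nhds
    ((hg.monotone_of_leftInverse hf hgf).monotoneOn _) Filter.univ_mem ?_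
  rw [image_univ]
  exact Filter.mem_of_superset (hs.mem_nhds (hf a)) (hg.subset_range_of_leftInverse hf hgf)

end LeftInverse

theorem tlog_texp {t u : ℝ} (h : 0 < texp t u) : tlog t (texp t u) = u := by
  rcases eq_or_ne t 1 with rfl | ht
  · simp [tlog, texp]
  have hs : 1 - t ≠ 0 := sub_ne_zero.2 (Ne.symm ht)
  simp only [texp, if_neg ht] at h ⊢
  have hpos : 0 < 1 + (1 - t) * u := by
    by_contra! hle
    rw [max_eq_left hle, Real.zero_rpow (one_div_ne_zero hs)] at h
    exact h.false
  rw [tlog, if_neg ht, max_eq_right hpos.le, ← Real.rpow_mul hpos.le, one_div_mul_cancel hs,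
    Real.rpow_one]
  field_simp
  ring

theorem hasDerivAt_tlog (t : ℝ) {x : ℝ} (hx : 0 < x) : HasDerivAt (tlog t) (x ^ (-t)) x := by
  rcases eq_or_ne t 1 with rfl | ht
  · rw [Real.rpow_neg_one]
    exact (Real.hasDerivAt_log hx.ne').congr_of_eventuallyEq
      (Filter.Eventually.of_forall fun y => by simp [tlog])
  have hs : 1 - t ≠ 0 := sub_ne_zero.2 (Ne.symm ht)
  have hd := ((Real.hasDerivAt_rpow_const (p := 1 - t) (Or.inl hx.ne')).sub_const 1).div_const
    (1 - t)
  rw [sub_sub_cancel_left, mul_div_cancel_left₀ _ hs] at hd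
  exact hd.congr_of_eventuallyEq (Filter.Eventually.of_forall fun y => by simp [tlog, ht])

/-- The link function of binary tempered logistic regression: the margin `a` for which the
positive class has probability `q`. -/
noncomputable def binaryLink (t q : ℝ) : ℝ := tlog t q - tlog t (1 - q)

theorem hasDerivAt_binaryLink (t : ℝ) {q : ℝ} (hq : q ∈ Ioo (0 : ℝ) 1) :
    HasDerivAt (binaryLink t) (q ^ (-t) + (1 - q) ^ (-t)) q := by
  have h1q : 0 < 1 - q := sub_pos.2 hq.2
  have hd := (hasDerivAt_tlog t h1q).comp q ((hasDerivAt_id q).const_sub 1)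
  have h := (hasDerivAt_tlog t hq.1).sub hd
  rwa [mul_neg_one, sub_neg_eq_add] at h

theorem binaryLink_deriv_pos (t : ℝ) {q : ℝ} (hq : q ∈ Ioo (0 : ℝ) 1) :
    0 < q ^ (-t) + (1 - q) ^ (-t) :=
  add_pos (Real.rpow_pos_of_pos hq.1 _) (Real.rpow_pos_of_pos (sub_pos.2 hq.2) _)

theorem strictMonoOn_binaryLink (t : ℝ) : StrictMonoOn (binaryLink t) (Ioo 0 1) := by
  refine strictMonoOn_of_deriv_pos (convex_Ioo 0 1)
    (fun q hq => (hasDerivAt_binaryLink t hq).continuousAt.continuousWithinAt) fun q hq => ?_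
  rw [interior_Ioo] at hq
  rw [(hasDerivAt_binaryLink t hq).deriv]
  exact binaryLink_deriv_pos t hq

theorem hasDerivAt_of_binaryLink_leftInverse {t : ℝ} {p : ℝ → ℝ} (hp : ∀ a, p a ∈ Ioo (0 : ℝ) 1)
    (hlink : LeftInverse (binaryLink t) p) (a : ℝ) :
    HasDerivAt p (p a ^ (-t) + (1 - p a) ^ (-t))⁻¹ a :=
  HasDerivAt.of_local_left_inverse
    ((strictMonoOn_binaryLink t).continuous_of_leftInverse isOpen_Ioo hp hlink).continuousAt
    (hasDerivAt_binaryLink t (hp a)) (binaryLink_deriv_pos t (hp a)).ne'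
    (Filter.Eventually.of_forall hlink)

theorem rpow_neg_mul_inv_eq_inv {t₁ t₂ q : ℝ} (hq : q ∈ Ioo (0 : ℝ) 1) :
    q ^ (-t₁) * (q ^ (-t₂) + (1 - q) ^ (-t₂))⁻¹
      = (q ^ (t₁ - t₂) + q ^ t₁ * (1 - q) ^ (-t₂))⁻¹ := by
  rw [Real.rpow_neg hq.1.le, ← mul_inv, mul_add, ← Real.rpow_add hq.1, ← sub_eq_add_neg]

theorem monotoneOn_rpow_add_rpow_mul_rpow_one_sub {t₁ t₂ : ℝ} (ht₂ : 0 ≤ t₂) (ht : t₂ ≤ t₁) :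
    MonotoneOn (fun q : ℝ => q ^ (t₁ - t₂) + q ^ t₁ * (1 - q) ^ (-t₂)) (Ioo 0 1) := by
  intro x hx y hy hxy
  have h1y : 0 < 1 - y := sub_pos.2 hy.2
  refine add_le_add ?_ ?_
  · exact Real.rpow_le_rpow hx.1.le hxy (sub_nonneg.2 ht)
  · exact mul_le_mul (Real.rpow_le_rpow hx.1.le hxy (ht₂.trans ht))
      (Real.rpow_le_rpow_of_nonpos h1y (by linarith) (neg_nonpos.2 ht₂))
      (Real.rpow_pos_of_pos (sub_pos.2 hx.2) _).le (Real.rpow_pos_of_pos hy.1 _).le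

theorem convexOn_neg_tlog_of_binaryLink_leftInverse {t₁ t₂ : ℝ} (ht₂ : 0 ≤ t₂) (ht : t₂ ≤ t₁)
    {p : ℝ → ℝ} (hp : ∀ a, p a ∈ Ioo (0 : ℝ) 1) (hlink : LeftInverse (binaryLink t₂) p) :
    ConvexOn ℝ univ (fun a => -tlog t₁ (p a)) := by
  set F : ℝ → ℝ := fun q => q ^ (t₁ - t₂) + q ^ t₁ * (1 - q) ^ (-t₂)
  have hderiv : ∀ a, HasDerivAt (fun a => -tlog t₁ (p a)) (-(F (p a))⁻¹) a := fun a => by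
    have := ((hasDerivAt_tlog t₁ (hp a).1).comp a
      (hasDerivAt_of_binaryLink_leftInverse hp hlink a)).neg
    rwa [rpow_neg_mul_inv_eq_inv (hp a)] at this
  refine Monotone.convexOn_univ_of_deriv (fun a => (hderiv a).differentiableAt) ?_
  rw [funext fun a => (hderiv a).deriv]
  intro a b hab
  have hpab := (strictMonoOn_binaryLink t₂).monotone_of_leftInverse hp hlink hab
  have hFa : 0 < F (p a) := add_pos (Real.rpow_pos_of_pos (hp a).1 _)
    (mul_pos (Real.rpow_pos_of_pos (hp a).1 _) (Real.rpow_pos_of_pos (sub_pos.2 (hp a).2) _))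
  exact neg_le_neg <| inv_anti₀ hFa <|
    monotoneOn_rpow_add_rpow_mul_rpow_one_sub ht₂ ht (hp a) (hp b) hpab

theorem binary_loss_convex_general (t₁ t₂ : ℝ) (ht₂1 : 1 ≤ t₂) (ht₂₁ : t₂ ≤ t₁) (G : ℝ → ℝ)
    (hG : ∀ a : ℝ, texp t₂ (a / 2 - G a) + texp t₂ (-a / 2 - G a) = 1)
    (hGpos : ∀ a : ℝ,
      0 < texp t₂ (a / 2 - G a) ∧ 0 < texp t₂ (-a / 2 - G a)) :
    ConvexOn ℝ Set.univ (fun a : ℝ => -tlog t₁ (texp t₂ (a / 2 - G a))) ∧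
    (t₁ = t₂ →
      (∀ a : ℝ, -tlog t₁ (texp t₂ (a / 2 - G a)) = G a - a / 2) ∧
      ConvexOn ℝ Set.univ (fun a : ℝ => G a - a / 2)) := by
  have hp : ∀ a, texp t₂ (a / 2 - G a) ∈ Ioo (0 : ℝ) 1 :=
    fun a => ⟨(hGpos a).1, by linarith [hG a, (hGpos a).2]⟩
  have hlink : LeftInverse (binaryLink t₂) (fun a => texp t₂ (a / 2 - G a)) := fun a => by
    rw [binaryLink, ← eq_sub_of_add_eq' (hG a), tlog_texp (hGpos a).1, tlog_texp (hGpos a).2]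
    ring
  have hconv := convexOn_neg_tlog_of_binaryLink_leftInverse (by linarith) ht₂₁ hp hlink
  refine ⟨hconv, fun ht => ?_⟩
  subst ht
  have hloss (a : ℝ) : -tlog t₁ (texp t₁ (a / 2 - G a)) = G a - a / 2 := by
    rw [tlog_texp (hGpos a).1]
    ring
  exact ⟨hloss, by simpa only [hloss] using hconv⟩

/-- Convexity of the binary two-temperature loss for `1 ≤ t₂ ≤ t₁ < 2`: with
`G` the log-partition function of the binary margin (both summands positive),
the surrogate loss `ξ(a) = -log_{t₁} exp_{t₂}(a/2 - G a)` is convex on `ℝ`;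
for `t₁ = t₂` it equals `G a - a/2`, which is in particular convex. -/
theorem binary_loss_convex (t₁ t₂ : ℝ) (ht₂1 : 1 ≤ t₂) (ht₂₁ : t₂ ≤ t₁)
    (ht₁2 : t₁ < 2) (G : ℝ → ℝ)
    (hG : ∀ a : ℝ, texp t₂ (a / 2 - G a) + texp t₂ (-a / 2 - G a) = 1)
    (hGpos : ∀ a : ℝ,
      0 < texp t₂ (a / 2 - G a) ∧ 0 < texp t₂ (-a / 2 - G a)) :
    ConvexOn ℝ Set.univ (fun a : ℝ => -tlog t₁ (texp t₂ (a / 2 - G a))) ∧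
    (t₁ = t₂ →
      (∀ a : ℝ, -tlog t₁ (texp t₂ (a / 2 - G a)) = G a - a / 2) ∧
      ConvexOn ℝ Set.univ (fun a : ℝ => G a - a / 2)) :=
  binary_loss_convex_general t₁ t₂ ht₂1 ht₂₁ G hG hGpos
end
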